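/- arXiv:1911.11542 — 2 statements merged into one kernel-verified Lean document; each statement's English description precedes it below -/
import Mathlib

section
/- If α > 0, β ≥ 0, and L is symmetric positive semidefinite, then the matrix Ŵ ∈ ℝ^{K×M} defined by vec(Ŵ) = F_M^{-1} (I_M ⊗ Φᵀ) vec(T) is the unique global minimizer of the cost C(W) = Σ_{n=1}^N ‖t_n − Wᵀφ_n‖₂² + α‖W‖_F² + β Σ_{n=1}^N (Wᵀφ_n)ᵀ L (Wᵀφ_n) over W ∈ ℝ^{K×M}. -/
open Matrix Kronecker

/-- Column-stacking vectorization: for `W ∈ ℝ^{a×b}`, `vec W` is the vector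
indexed by `b × a` with `vec W (j, i) = W i j`. -/
def vec {a b : Type*} (W : Matrix a b ℝ) : b × a → ℝ := fun p => W p.2 p.1

/-! With `x = vec W`, the identity `(A ⊗ B) vec X = vec (B X Aᵀ)` turns the cost into the
quadratic `C W = xᵀ F x - 2 bᵀ x + ‖T‖²` with `b = (I ⊗ Φᵀ) vec T`. Since `(I + βL) ⊗ ΦᵀΦ` is
positive semidefinite and `α > 0`, `F` is positive definite; completing the square around the
solution `x̂ = F⁻¹ b` of the normal equations gives `C W = C Ŵ + (x - x̂)ᵀ F (x - x̂)`. -/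

namespace Matrix

variable {R ι m n k : Type*} [Fintype ι] [Fintype m] [Fintype n] [Fintype k]

theorem vec_dotProduct_vec_eq_sum_sum [AddCommMonoid R] [Mul R] (A B : Matrix n m R) :
    A.vec ⬝ᵥ B.vec = ∑ i, ∑ j, A i j * B i j := by
  simp only [dotProduct, Matrix.vec, Fintype.sum_prod_type]
  exact Finset.sum_comm

variable [CommRing R]

theorem vec_dotProduct_kronecker_gram_mulVec_vec (A : Matrix m m R) (Φ : Matrix n k R)
    (W : Matrix k m R) :
    W.vec ⬝ᵥ (A ⊗ₖ (Φᵀ * Φ)) *ᵥ W.vec = ∑ i, (Φ * W) i ⬝ᵥ A *ᵥ (Φ * W) i := by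
  have hgram : Wᵀ * (Φᵀ * Φ * W * Aᵀ) = (Φ * W)ᵀ * (Φ * W * Aᵀ) := by
    simp only [transpose_mul, Matrix.mul_assoc]
  rw [kronecker_mulVec_vec, vec_dotProduct_vec, hgram, ← vec_dotProduct_vec,
    vec_dotProduct_vec_eq_sum_sum]
  simp only [mul_apply_eq_vecMul (Φ * W) Aᵀ, vecMul_transpose]
  rfl

theorem one_kronecker_transpose_mulVec_vec_dotProduct_vec [DecidableEq m] (Φ : Matrix n k R)
    (T : Matrix n m R) (W : Matrix k m R) :
    ((1 : Matrix m m R) ⊗ₖ Φᵀ) *ᵥ T.vec ⬝ᵥ W.vec = T.vec ⬝ᵥ (Φ * W).vec := by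
  rw [kronecker_mulVec_vec, transpose_one, Matrix.mul_one, vec_dotProduct_vec,
    vec_dotProduct_vec, transpose_mul, transpose_transpose, Matrix.mul_assoc]

theorem sub_dotProduct_mulVec_sub_of_mulVec_eq {F : Matrix ι ι R} (hF : F.IsSymm)
    {x₀ b : ι → R} (h : F *ᵥ x₀ = b) (x : ι → R) :
    (x - x₀) ⬝ᵥ F *ᵥ (x - x₀)
      = (x ⬝ᵥ F *ᵥ x - 2 * (b ⬝ᵥ x)) - (x₀ ⬝ᵥ F *ᵥ x₀ - 2 * (b ⬝ᵥ x₀)) := by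
  have hsymm (y z : ι → R) : y ⬝ᵥ F *ᵥ z = F *ᵥ y ⬝ᵥ z := by
    rw [dotProduct_mulVec, ← mulVec_transpose, hF.eq]
  rw [mulVec_sub, sub_dotProduct, dotProduct_sub, dotProduct_sub, hsymm x₀, hsymm x₀ x₀, h,
    dotProduct_comm x b]
  ring

theorem PosDef.unique_minimizer_of_eq_add_quadForm {X : Type*} {f : X → ℝ} {e : X → ι → ℝ}
    (he : Function.Injective e) {F : Matrix ι ι ℝ} (hF : F.PosDef) {x₀ : X}
    (hf : ∀ x, f x = (e x - e x₀) ⬝ᵥ F *ᵥ (e x - e x₀) + f x₀) :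
    (∀ x, f x₀ ≤ f x) ∧ ∀ x, f x = f x₀ → x = x₀ := by
  refine ⟨fun x => ?_, fun x hx => he ?_⟩
  · rw [hf x]
    exact le_add_of_nonneg_left (hF.posSemidef.dotProduct_mulVec_nonneg (e x - e x₀))
  · by_contra hne
    have hpos := hF.dotProduct_mulVec_pos (sub_ne_zero.mpr hne)
    rw [star_trivial] at hpos
    linarith [hf x]

theorem posDef_kronecker_gram_add_smul_one [DecidableEq m] [DecidableEq k] (Φ : Matrix n k ℝ)
    {α β : ℝ} (hα : 0 < α) (hβ : 0 ≤ β) {L : Matrix m m ℝ} (hL : L.PosSemidef) :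
    ((1 + β • L) ⊗ₖ (Φᵀ * Φ) + α • 1 : Matrix (m × k) (m × k) ℝ).PosDef := by
  have hgram : (Φᵀ * Φ).PosSemidef := by
    simpa using posSemidef_conjTranspose_mul_self Φ
  exact PosDef.posSemidef_add ((PosSemidef.one.add (hL.smul hβ)).kronecker hgram)
    (PosDef.one.smul hα)

end Matrix

section Cost

variable {R m n k : Type*} [CommRing R] [Fintype m] [Fintype n] [Fintype k]

def lrgCost (Φ : Matrix n k R) (T : Matrix n m R) (α β : R) (L : Matrix m m R)
    (W : Matrix k m R) : R :=
  (∑ i, ∑ j, (T i j - (Wᵀ *ᵥ Φ i) j) ^ 2) + α * (∑ a, ∑ j, (W a j) ^ 2)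
    + β * ∑ i, Wᵀ *ᵥ Φ i ⬝ᵥ L *ᵥ (Wᵀ *ᵥ Φ i)

theorem lrgCost_eq_quadForm [DecidableEq m] [DecidableEq k] (Φ : Matrix n k R)
    (T : Matrix n m R) (α β : R) (L : Matrix m m R) (W : Matrix k m R) :
    lrgCost Φ T α β L W
      = W.vec ⬝ᵥ ((1 + β • L) ⊗ₖ (Φᵀ * Φ) + α • 1) *ᵥ W.vec
        - 2 * (((1 : Matrix m m R) ⊗ₖ Φᵀ) *ᵥ T.vec ⬝ᵥ W.vec) + T.vec ⬝ᵥ T.vec := by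
  have hrow (i : n) : Wᵀ *ᵥ Φ i = (Φ * W) i := by
    rw [mulVec_transpose, mul_apply_eq_vecMul]
  have hquad : ∑ i, (Φ * W) i ⬝ᵥ (1 + β • L) *ᵥ (Φ * W) i
      = (Φ * W).vec ⬝ᵥ (Φ * W).vec + β * ∑ i, (Φ * W) i ⬝ᵥ L *ᵥ (Φ * W) i := by
    simp only [add_mulVec, one_mulVec, smul_mulVec, dotProduct_add, dotProduct_smul,
      Finset.sum_add_distrib, smul_eq_mul, Finset.mul_sum, vec_dotProduct_vec_eq_sum_sum]
    rfl
  have hresidual :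
      ∑ i, ∑ j, (T i j - (Φ * W) i j) ^ 2 = (T - Φ * W).vec ⬝ᵥ (T - Φ * W).vec := by
    simp only [vec_dotProduct_vec_eq_sum_sum, Matrix.sub_apply, sq]
  have hnorm : ∑ a, ∑ j, W a j ^ 2 = W.vec ⬝ᵥ W.vec := by
    simp only [vec_dotProduct_vec_eq_sum_sum, sq]
  simp only [lrgCost, hrow]
  rw [hresidual, hnorm, add_mulVec, dotProduct_add, vec_dotProduct_kronecker_gram_mulVec_vec,
    hquad, smul_mulVec, one_mulVec, dotProduct_smul, smul_eq_mul,
    one_kronecker_transpose_mulVec_vec_dotProduct_vec, vec_sub, sub_dotProduct, dotProduct_sub,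
    dotProduct_sub, dotProduct_comm (Φ * W).vec]
  ring

end Cost

/-- If `α > 0`, `β ≥ 0`, and `L` is symmetric positive semidefinite, then
`Ŵ` defined by `vec Ŵ = F_M⁻¹ (I_M ⊗ Φᵀ) vec T` is the unique global
minimizer of the LRG cost
`C(W) = Σₙ ‖tₙ − Wᵀφₙ‖₂² + α‖W‖_F² + β Σₙ (Wᵀφₙ)ᵀ L (Wᵀφₙ)`. -/
theorem lrg_unique_minimizer (N K M : ℕ)
    (Φ : Matrix (Fin N) (Fin K) ℝ) (T : Matrix (Fin N) (Fin M) ℝ)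
    (α β : ℝ) (hα : 0 < α) (hβ : 0 ≤ β)
    (L : Matrix (Fin M) (Fin M) ℝ) (hL : L.PosSemidef)
    (F : Matrix (Fin M × Fin K) (Fin M × Fin K) ℝ)
    (hF : F = (1 + β • L) ⊗ₖ (Φᵀ * Φ) + α • 1)
    (C : Matrix (Fin K) (Fin M) ℝ → ℝ)
    (hC : ∀ W, C W = (∑ n, ∑ m, (T n m - Wᵀ.mulVec (Φ n) m) ^ 2)
        + α * (∑ k, ∑ m, (W k m) ^ 2)
        + β * ∑ n, Wᵀ.mulVec (Φ n) ⬝ᵥ L.mulVec (Wᵀ.mulVec (Φ n)))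
    (What : Matrix (Fin K) (Fin M) ℝ)
    (hWhat : _root_.vec What
      = F⁻¹.mulVec (((1 : Matrix (Fin M) (Fin M) ℝ) ⊗ₖ Φᵀ).mulVec (_root_.vec T))) :
    (∀ W, C What ≤ C W) ∧ (∀ W, C W = C What → W = What) := by
  obtain rfl : C = lrgCost Φ T α β L := funext hC
  have hFpd : F.PosDef := hF ▸ posDef_kronecker_gram_add_smul_one Φ hα hβ hL
  have hsol : F *ᵥ What.vec = ((1 : Matrix (Fin M) (Fin M) ℝ) ⊗ₖ Φᵀ) *ᵥ T.vec := by
    -- `_root_.vec` and `Matrix.vec` agree definitionally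
    rw [show What.vec = _ from hWhat, mulVec_mulVec,
      mul_nonsing_inv F ((isUnit_iff_isUnit_det F).mp hFpd.isUnit), one_mulVec]
    rfl
  refine hFpd.unique_minimizer_of_eq_add_quadForm vec_bijective.injective fun W => ?_
  rw [sub_dotProduct_mulVec_sub_of_mulVec_eq (isHermitian_iff_isSymm.mp hFpd.isHermitian) hsol,
    lrgCost_eq_quadForm, lrgCost_eq_quadForm, ← hF]
  ring
end

section
/- (Corollary 1) Assume α > 0. If the incoming node is disconnected, i.e., a = 0 ∈ ℝ^M, then the optimal LRG coefficients for the expanded graph satisfy vec(Ŵ_{M+1}) = [vec(Ŵ_M) ; (ΦᵀΦ + α I_K)^{-1} Φᵀ t̲]: the coefficients for the original M nodes are unchanged, and the coefficients for the new node equal the ridge-regression solution on its own data. -/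
open Matrix Kronecker

/-- The graph Laplacian `L = D − A` of a weighted adjacency matrix `A`,
where `D` is the diagonal matrix of row sums of `A`. -/
noncomputable def graphLaplacian {m : Type*} [Fintype m] [DecidableEq m]
    (A : Matrix m m ℝ) : Matrix m m ℝ :=
  Matrix.diagonal (fun i => ∑ j, A i j) - A

/-- Reindexing equivalence: the first `M` Kronecker blocks of size `K`
correspond to the original `M` nodes and the last block of size `K` to the
new node. -/
def blockEquiv (M K : ℕ) : (Fin M ⊕ Unit) × Fin K ≃ (Fin M × Fin K) ⊕ Fin K :=
  (Equiv.sumProdDistrib (Fin M) Unit (Fin K)).trans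
    ((Equiv.refl (Fin M × Fin K)).sumCongr (Equiv.punitProd (Fin K)))

/-! With `a = 0` the new node is an isolated vertex, so `L_{M+1} = diag(L_M, 0)`. Regrouping the
Kronecker index by nodes, `F_{M+1} = diag(F_M, ΦᵀΦ + αI)` and `I ⊗ Φᵀ = diag(I ⊗ Φᵀ, Φᵀ)`, while
the targets split as `[vec T_M; t̲]`. Both diagonal blocks of `F_{M+1}` are positive definite (the
Laplacian of a symmetric nonnegative weight matrix is positive semidefinite), so `F_{M+1}⁻¹` is
block diagonal and the system decouples into the old one and a ridge regression at the new node. -/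

section Laplacian

variable {m n : Type*} [Fintype m] [Fintype n] [DecidableEq m] [DecidableEq n]

lemma isSymm_graphLaplacian {A : Matrix m m ℝ} (hA : A.IsSymm) : (graphLaplacian A).IsSymm :=
  (isSymm_diagonal _).sub hA

lemma dotProduct_graphLaplacian_mulVec {A : Matrix m m ℝ} (hA : A.IsSymm) (x : m → ℝ) :
    x ⬝ᵥ graphLaplacian A *ᵥ x = (∑ i, ∑ j, A i j * (x i - x j) ^ 2) / 2 := by
  have hdeg : x ⬝ᵥ diagonal (fun i => ∑ j, A i j) *ᵥ x = ∑ i, ∑ j, A i j * x i ^ 2 := by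
    simp only [dotProduct, mulVec_diagonal, Finset.sum_mul, Finset.mul_sum]
    exact Finset.sum_congr rfl fun i _ => Finset.sum_congr rfl fun j _ => by ring
  have hadj : x ⬝ᵥ A *ᵥ x = ∑ i, ∑ j, A i j * (x i * x j) := by
    simp only [dotProduct, mulVec, Finset.mul_sum]
    exact Finset.sum_congr rfl fun i _ => Finset.sum_congr rfl fun j _ => by ring
  have hswap : ∑ i, ∑ j, A i j * x j ^ 2 = ∑ i, ∑ j, A i j * x i ^ 2 := by
    rw [Finset.sum_comm]
    simp_rw [hA.apply]
  have hexpand : ∀ i j, A i j * (x i - x j) ^ 2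
      = A i j * x i ^ 2 + A i j * x j ^ 2 - 2 * (A i j * (x i * x j)) := fun i j => by ring
  simp_rw [graphLaplacian, sub_mulVec, dotProduct_sub, hdeg, hadj, hexpand,
    Finset.sum_sub_distrib, Finset.sum_add_distrib, hswap, ← Finset.mul_sum]
  ring

lemma posSemidef_graphLaplacian {A : Matrix m m ℝ} (hA : A.IsSymm) (hA₀ : ∀ i j, 0 ≤ A i j) :
    (graphLaplacian A).PosSemidef := by
  refine .of_dotProduct_mulVec_nonneg ?_ fun x => ?_
  · rw [IsHermitian, conjTranspose_eq_transpose_of_trivial]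
    exact isSymm_graphLaplacian hA
  · rw [star_trivial, dotProduct_graphLaplacian_mulVec hA]
    exact div_nonneg (Finset.sum_nonneg fun i _ => Finset.sum_nonneg fun j _ =>
      mul_nonneg (hA₀ i j) (sq_nonneg _)) zero_le_two

lemma graphLaplacian_fromBlocks (A : Matrix m m ℝ) (D : Matrix n n ℝ) :
    graphLaplacian (fromBlocks A 0 0 D) = fromBlocks (graphLaplacian A) 0 0 (graphLaplacian D) := by
  ext (i | i) (j | j) <;> simp [graphLaplacian, diagonal_apply, Fintype.sum_sum_type]

end Laplacian

section BlockAlgebra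

variable {R : Type*} [CommRing R] {ι ι' m n : Type*}

lemma mulVec_comp_equiv {κ κ' : Type*} [Fintype κ] [Fintype κ'] (B : Matrix ι κ R) (e : ι' ≃ ι)
    (f : κ' ≃ κ) (v : κ → R) : (B *ᵥ v) ∘ e = B.submatrix e f *ᵥ (v ∘ f) := by
  rw [submatrix_mulVec_equiv, Function.comp_assoc, Equiv.self_comp_symm, Function.comp_id]

lemma inv_mulVec_comp_equiv [Fintype ι] [DecidableEq ι] [Fintype ι'] [DecidableEq ι']
    (F : Matrix ι ι R) (e : ι' ≃ ι) (v : ι → R) :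
    (F⁻¹ *ᵥ v) ∘ e = (F.submatrix e e)⁻¹ *ᵥ (v ∘ e) := by
  rw [inv_submatrix_equiv]
  exact mulVec_comp_equiv _ e e v

lemma fromBlocks_zero_mulVec_sumElim [Fintype m] [Fintype n] {m' n' : Type*} (A : Matrix m' m R)
    (D : Matrix n' n R) (u : m → R) (v : n → R) :
    fromBlocks A 0 0 D *ᵥ Sum.elim u v = Sum.elim (A *ᵥ u) (D *ᵥ v) := by
  rw [fromBlocks_mulVec]
  simp

lemma fromBlocks_zero_inv_mulVec_sumElim [Fintype m] [Fintype n] [DecidableEq m] [DecidableEq n]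
    {A : Matrix m m R} {D : Matrix n n R} (hAD : IsUnit A ↔ IsUnit D) (u : m → R) (v : n → R) :
    (fromBlocks A 0 0 D)⁻¹ *ᵥ Sum.elim u v = Sum.elim (A⁻¹ *ᵥ u) (D⁻¹ *ᵥ v) := by
  rw [inv_fromBlocks_zero₂₁_of_isUnit_iff _ _ _ hAD, Matrix.mul_zero, Matrix.zero_mul, neg_zero,
    fromBlocks_zero_mulVec_sumElim]

lemma fromBlocks_kronecker_submatrix_blockEquiv {M N K : ℕ} (S : Matrix (Fin M) (Fin M) R)
    (T : Matrix Unit Unit R) (G : Matrix (Fin K) (Fin N) R) :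
    (fromBlocks S 0 0 T ⊗ₖ G).submatrix (blockEquiv M K).symm (blockEquiv M N).symm
      = fromBlocks (S ⊗ₖ G) 0 0 (T () () • G) := by
  ext (⟨i, k⟩ | k) (⟨j, l⟩ | l) <;> simp [blockEquiv]

lemma one_kronecker_submatrix_blockEquiv {M N K : ℕ} (G : Matrix (Fin K) (Fin N) R) :
    ((1 : Matrix (Fin M ⊕ Unit) (Fin M ⊕ Unit) R) ⊗ₖ G).submatrix (blockEquiv M K).symm
      (blockEquiv M N).symm = fromBlocks (1 ⊗ₖ G) 0 0 G := by
  rw [← fromBlocks_one, fromBlocks_kronecker_submatrix_blockEquiv, one_apply_eq, one_smul]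

end BlockAlgebra

lemma vec_sumElim_comp_blockEquiv_symm {N M : ℕ} (T : Matrix (Fin N) (Fin M) ℝ) (t : Fin N → ℝ) :
    _root_.vec (of fun n => Sum.elim (fun j => T n j) fun _ => t n) ∘ (blockEquiv M N).symm
      = Sum.elim (_root_.vec T) t := by
  funext p
  rcases p with ⟨j, n⟩ | n <;> rfl

lemma posDef_add_smul_one {m : Type*} [Fintype m] [DecidableEq m] {S : Matrix m m ℝ}
    (hS : S.PosSemidef) {α : ℝ} (hα : 0 < α) : (S + α • 1).PosDef :=
  PosDef.posSemidef_add hS (PosDef.one.smul hα)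

section LRGMatrix

variable {m k : Type*} [Fintype m] [DecidableEq m] [Fintype k] [DecidableEq k]

-- The paper's `F_M`, with `G = ΦᵀΦ`.
noncomputable def lrgMatrix (A : Matrix m m ℝ) (G : Matrix k k ℝ) (α β : ℝ) :
    Matrix (m × k) (m × k) ℝ :=
  (1 + β • graphLaplacian A) ⊗ₖ G + α • 1

lemma posDef_lrgMatrix {A : Matrix m m ℝ} (hA : A.IsSymm) (hA₀ : ∀ i j, 0 ≤ A i j)
    {G : Matrix k k ℝ} (hG : G.PosSemidef) {α β : ℝ} (hα : 0 < α) (hβ : 0 ≤ β) :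
    (lrgMatrix A G α β).PosDef :=
  posDef_add_smul_one
    ((PosSemidef.one.add ((posSemidef_graphLaplacian hA hA₀).smul hβ)).kronecker hG) hα

end LRGMatrix

lemma lrgMatrix_fromBlocks_submatrix_blockEquiv {M K : ℕ} (A : Matrix (Fin M) (Fin M) ℝ)
    (G : Matrix (Fin K) (Fin K) ℝ) (α β : ℝ) :
    (lrgMatrix (fromBlocks A 0 0 0) G α β).submatrix (blockEquiv M K).symm (blockEquiv M K).symm
      = fromBlocks (lrgMatrix A G α β) 0 0 (G + α • 1) := by
  have hL : 1 + β • graphLaplacian (fromBlocks A 0 0 (0 : Matrix Unit Unit ℝ))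
      = fromBlocks (1 + β • graphLaplacian A) 0 0 1 := by
    rw [graphLaplacian_fromBlocks, ← fromBlocks_one, fromBlocks_smul, fromBlocks_add]
    simp [graphLaplacian]
  simp only [lrgMatrix, hL, submatrix_add, Pi.add_apply, submatrix_smul, Pi.smul_apply,
    submatrix_one_equiv, fromBlocks_kronecker_submatrix_blockEquiv]
  rw [← fromBlocks_one, fromBlocks_smul, fromBlocks_add]
  simp

theorem lrg_disconnected_node_general (N K M : ℕ) (Φ : Matrix (Fin N) (Fin K) ℝ)
    (α β : ℝ) (hα : 0 < α) (hβ : 0 ≤ β)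
    (TM : Matrix (Fin N) (Fin M) ℝ) (t : Fin N → ℝ)
    (A : Matrix (Fin M) (Fin M) ℝ)
    (hsymm : A.IsSymm) (hnonneg : ∀ i j, 0 ≤ A i j)
    (a : Fin M → ℝ) (ha0 : a = 0)
    (A' : Matrix (Fin M ⊕ Unit) (Fin M ⊕ Unit) ℝ)
    (hA' : A' = Matrix.fromBlocks A
      (Matrix.of fun i (_ : Unit) => a i) (Matrix.of fun (_ : Unit) j => a j) 0)
    (TM1 : Matrix (Fin N) (Fin M ⊕ Unit) ℝ)
    (hTM1 : TM1 = Matrix.of fun n => Sum.elim (fun j => TM n j) (fun _ => t n))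
    (FM : Matrix (Fin M × Fin K) (Fin M × Fin K) ℝ)
    (hFM : FM = (1 + β • graphLaplacian A) ⊗ₖ (Φᵀ * Φ) + α • 1)
    (FM1 : Matrix ((Fin M ⊕ Unit) × Fin K) ((Fin M ⊕ Unit) × Fin K) ℝ)
    (hFM1 : FM1 = (1 + β • graphLaplacian A') ⊗ₖ (Φᵀ * Φ) + α • 1)
    (WM : Matrix (Fin K) (Fin M) ℝ)
    (hWM : _root_.vec WM
      = FM⁻¹.mulVec (((1 : Matrix (Fin M) (Fin M) ℝ) ⊗ₖ Φᵀ).mulVec (_root_.vec TM)))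
    (WM1 : Matrix (Fin K) (Fin M ⊕ Unit) ℝ)
    (hWM1 : _root_.vec WM1
      = FM1⁻¹.mulVec
          (((1 : Matrix (Fin M ⊕ Unit) (Fin M ⊕ Unit) ℝ) ⊗ₖ Φᵀ).mulVec (_root_.vec TM1))) :
    _root_.vec WM1 = fun p => Sum.elim
      (_root_.vec WM)
      ((Φᵀ * Φ + α • 1)⁻¹.mulVec (Φᵀ.mulVec t))
      (blockEquiv M K p) := by
  obtain rfl : A' = fromBlocks A 0 0 0 := by
    rw [hA', ha0]
    rfl
  obtain rfl : FM = lrgMatrix A (Φᵀ * Φ) α β := hFM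
  obtain rfl : FM1 = lrgMatrix (fromBlocks A 0 0 0) (Φᵀ * Φ) α β := hFM1
  have hG : (Φᵀ * Φ).PosSemidef := by
    simpa [conjTranspose_eq_transpose_of_trivial] using posSemidef_conjTranspose_mul_self Φ
  have hunits : IsUnit (lrgMatrix A (Φᵀ * Φ) α β) ↔ IsUnit (Φᵀ * Φ + α • 1) :=
    iff_of_true (posDef_lrgMatrix hsymm hnonneg hG hα hβ).isUnit (posDef_add_smul_one hG hα).isUnit
  have key : _root_.vec WM1 ∘ (blockEquiv M K).symm
      = Sum.elim (_root_.vec WM) ((Φᵀ * Φ + α • 1)⁻¹ *ᵥ Φᵀ *ᵥ t) := by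
    rw [hWM1, inv_mulVec_comp_equiv, lrgMatrix_fromBlocks_submatrix_blockEquiv,
      mulVec_comp_equiv _ _ (blockEquiv M N).symm, one_kronecker_submatrix_blockEquiv, hTM1,
      vec_sumElim_comp_blockEquiv_symm, fromBlocks_zero_mulVec_sumElim,
      fromBlocks_zero_inv_mulVec_sumElim hunits, hWM]
  funext p
  simpa using congrFun key (blockEquiv M K p)

/-- (Corollary 1) If the incoming node is disconnected (`a = 0`), then
`vec Ŵ_{M+1} = [vec Ŵ_M ; (ΦᵀΦ + α I_K)⁻¹ Φᵀ t̲]`: the coefficients for the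
original `M` nodes are unchanged, and the coefficients for the new node equal
the ridge-regression solution on its own data. -/
theorem lrg_disconnected_node (N K M : ℕ) (Φ : Matrix (Fin N) (Fin K) ℝ)
    (α β : ℝ) (hα : 0 < α) (hβ : 0 ≤ β)
    (TM : Matrix (Fin N) (Fin M) ℝ) (t : Fin N → ℝ)
    (A : Matrix (Fin M) (Fin M) ℝ)
    (hsymm : A.IsSymm) (hnonneg : ∀ i j, 0 ≤ A i j) (hdiag : ∀ i, A i i = 0)
    (a : Fin M → ℝ) (ha0 : a = 0)
    (A' : Matrix (Fin M ⊕ Unit) (Fin M ⊕ Unit) ℝ)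
    (hA' : A' = Matrix.fromBlocks A
      (Matrix.of fun i (_ : Unit) => a i) (Matrix.of fun (_ : Unit) j => a j) 0)
    (TM1 : Matrix (Fin N) (Fin M ⊕ Unit) ℝ)
    (hTM1 : TM1 = Matrix.of fun n => Sum.elim (fun j => TM n j) (fun _ => t n))
    (FM : Matrix (Fin M × Fin K) (Fin M × Fin K) ℝ)
    (hFM : FM = (1 + β • graphLaplacian A) ⊗ₖ (Φᵀ * Φ) + α • 1)
    (FM1 : Matrix ((Fin M ⊕ Unit) × Fin K) ((Fin M ⊕ Unit) × Fin K) ℝ)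
    (hFM1 : FM1 = (1 + β • graphLaplacian A') ⊗ₖ (Φᵀ * Φ) + α • 1)
    (WM : Matrix (Fin K) (Fin M) ℝ)
    (hWM : _root_.vec WM
      = FM⁻¹.mulVec (((1 : Matrix (Fin M) (Fin M) ℝ) ⊗ₖ Φᵀ).mulVec (_root_.vec TM)))
    (WM1 : Matrix (Fin K) (Fin M ⊕ Unit) ℝ)
    (hWM1 : _root_.vec WM1
      = FM1⁻¹.mulVec
          (((1 : Matrix (Fin M ⊕ Unit) (Fin M ⊕ Unit) ℝ) ⊗ₖ Φᵀ).mulVec (_root_.vec TM1))) :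
    _root_.vec WM1 = fun p => Sum.elim
      (_root_.vec WM)
      ((Φᵀ * Φ + α • 1)⁻¹.mulVec (Φᵀ.mulVec t))
      (blockEquiv M K p) :=
  lrg_disconnected_node_general N K M Φ α β hα hβ TM t A hsymm hnonneg a ha0 A' hA' TM1 hTM1 FM hFM
    FM1 hFM1 WM hWM WM1 hWM1
end
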